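/- arXiv:2001.10927 — 6 statements merged into one kernel-verified Lean document; each statement's English description precedes it below -/
import Mathlib

section
/- The energy-transfer map Λ is an involution: for every pair (p,s) of a primary particle and a secondary particle, Λ(Λ(p,s)) = (p,s), and for every pair (s,p) of a secondary particle and a primary particle, Λ(Λ(s,p)) = (s,p). -/
/-- The energy transfer `Λ` on a (primary, secondary) pair:
`Λ((k,c), (k',c',c'')) = ((k' + ε c' c'', c, c'), (k − ε c c' − ε c' c'', c''))`. -/
def LamPS {C : Type*} (ε : C → C → ℤ) (p : ℤ × C) (s : ℤ × C × C) :
    (ℤ × C × C) × (ℤ × C) :=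
  ((s.1 + ε s.2.1 s.2.2, p.2, s.2.1), (p.1 - ε p.2 s.2.1 - ε s.2.1 s.2.2, s.2.2))

/-- The energy transfer `Λ` on a (secondary, primary) pair:
`Λ((k,c,c'), (k',c'')) = ((k' + ε c c' + ε c' c'', c), (k − ε c' c'', c', c''))`. -/
def LamSP {C : Type*} (ε : C → C → ℤ) (s : ℤ × C × C) (p : ℤ × C) :
    (ℤ × C) × (ℤ × C × C) :=
  ((p.1 + ε s.2.1 s.2.2 + ε s.2.2 p.2, s.2.1), (s.1 - ε s.2.2 p.2, s.2.2, p.2))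

theorem LamSP_LamPS {C : Type*} (ε : C → C → ℤ) (p : ℤ × C) (s : ℤ × C × C) :
    LamSP ε (LamPS ε p s).1 (LamPS ε p s).2 = (p, s) := by
  obtain ⟨k, c⟩ := p
  obtain ⟨k', c', c''⟩ := s
  simp only [LamPS, LamSP, Prod.mk.injEq, and_true]
  constructor <;> ring

theorem LamPS_LamSP {C : Type*} (ε : C → C → ℤ) (s : ℤ × C × C) (p : ℤ × C) :
    LamPS ε (LamSP ε s p).1 (LamSP ε s p).2 = (s, p) := by
  obtain ⟨k, c, c'⟩ := s
  obtain ⟨k', c''⟩ := p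
  simp only [LamPS, LamSP, Prod.mk.injEq, and_true]
  constructor <;> ring

theorem statement8_general {C : Type*} (ε : C → C → ℤ) :
    (∀ (p : ℤ × C) (s : ℤ × C × C),
      LamSP ε (LamPS ε p s).1 (LamPS ε p s).2 = (p, s)) ∧
    (∀ (s : ℤ × C × C) (p : ℤ × C),
      LamPS ε (LamSP ε s p).1 (LamSP ε s p).2 = (s, p)) :=
  ⟨LamSP_LamPS ε, LamPS_LamSP ε⟩

/-- The energy transfer `Λ` is an involution: `Λ ∘ Λ` is the identity on
(primary, secondary) pairs and on (secondary, primary) pairs. -/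
theorem statement8 {C : Type*} (ε : C → C → ℤ)
    (hε : ∀ c c', ε c c' = 0 ∨ ε c c' = 1) :
    (∀ (p : ℤ × C) (s : ℤ × C × C),
      LamSP ε (LamPS ε p s).1 (LamPS ε p s).2 = (p, s)) ∧
    (∀ (s : ℤ × C × C) (p : ℤ × C),
      LamPS ε (LamSP ε s p).1 (LamSP ε s p).2 = (s, p)) :=
  statement8_general ε
end

section
/- With λ = ((l₁,c₁),…,(l_s,c_s)) a sequence of primary particles consecutively related by ≻_ε, and with I, J the subsets of {1,…,s} such that I, I+1, J form a set-partition of {1,…,s}, l_i − l_{i+1} = Δ(i,i+1) for all i ∈ I, and l_{j−1} − l_j > Δ(j−1,j) for all j ∈ J with j ≥ 2, define φ(j,i) = l_j − 2 l_{i+1} − Δ(j,i+1) − Δ(i+1−β(j,i), i+1) for (j,i) ∈ J × I. Then φ is non-increasing in its first argument on J and non-decreasing in its second argument on I: for all j < j' in J and i in I, φ(j,i) ≥ φ(j',i), and for all j in J and i < i' in I, φ(j,i) ≤ φ(j,i'). -/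
open Finset in
/-- The formal energy of transfer `Δ(k,k')` along the state sequence `c`:
`Δ(k,k') = Σ_{u=k}^{k'−1} ε(c_u,c_{u+1})` for `k ≤ k'` and `Δ(k,k') = −Δ(k',k)` else. -/
noncomputable def Del {C : Type*} (ε : C → C → ℤ) (c : ℤ → C) (k k' : ℤ) : ℤ :=
  (∑ u ∈ Finset.Ico k k', ε (c u) (c (u + 1))) -
    ∑ u ∈ Finset.Ico k' k, ε (c u) (c (u + 1))

/-- `β(k,k') = |[k,k') ∩ J|` for `k ≤ k'` and `β(k,k') = −β(k',k)` otherwise. -/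
noncomputable def Bet (J : Finset ℤ) (k k' : ℤ) : ℤ :=
  ((Finset.Ico k k' ∩ J).card : ℤ) - ((Finset.Ico k' k ∩ J).card : ℤ)

/-- The function `φ(j,i) = l_j − 2 l_{i+1} − Δ(j,i+1) − Δ(i+1−β(j,i), i+1)`. -/
noncomputable def Phi {C : Type*} (ε : C → C → ℤ) (c : ℤ → C) (l : ℤ → ℤ) (J : Finset ℤ)
    (j i : ℤ) : ℤ :=
  l j - 2 * l (i + 1) - Del ε c j (i + 1) - Del ε c (i + 1 - Bet J j i) (i + 1)

/-!
With `D = Δ(0,·)` and `B = β(0,·)` one has `Δ(a,b) = D b − D a` and `β(a,b) = B b − B a`; since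
the increments of `D` and `B` lie in `{0,1}`, the maps `D`, `B`, `k ↦ k − D k` and `k ↦ k − B k`
are monotone. Then `φ(j,i) = (l_j + D_j) − 2 (l_{i+1} + D_{i+1}) + D(i + 1 − B_i + B_j)`, and the
chain condition together with the strict inequality at the points of `J` make
`k ↦ l_k + D_k + B_{k+1}` non-increasing on `[1,s]`, from which both monotonicity statements
follow.
-/

noncomputable def signedSum (f : ℤ → ℤ) (a b : ℤ) : ℤ :=
  (∑ u ∈ Finset.Ico a b, f u) - ∑ u ∈ Finset.Ico b a, f u

section signedSum

variable (f : ℤ → ℤ)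

@[simp]
theorem signedSum_self (a : ℤ) : signedSum f a a = 0 := by
  simp [signedSum]

theorem signedSum_add_one_right (a b : ℤ) :
    signedSum f a (b + 1) = signedSum f a b + f b := by
  unfold signedSum
  rcases le_or_gt a b with h | h
  · rw [← Finset.sum_Ico_add_eq_sum_Ico_add_one h, Finset.Ico_eq_empty_of_le h,
      Finset.Ico_eq_empty_of_le (show a ≤ b + 1 by omega)]
    simp
  · rw [← Finset.insert_Ico_add_one_left_eq_Ico h, Finset.sum_insert (by simp),
      Finset.Ico_eq_empty_of_le h.le, Finset.Ico_eq_empty_of_le (show b + 1 ≤ a by omega)]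
    simp

theorem signedSum_eq_sub (a b : ℤ) : signedSum f a b = signedSum f 0 b - signedSum f 0 a := by
  induction b using Int.induction_on with
  | zero => simp [signedSum]
  | succ k ih => rw [signedSum_add_one_right, signedSum_add_one_right, ih]; ring
  | pred k ih =>
    have ha := signedSum_add_one_right f a (-k - 1)
    have h0 := signedSum_add_one_right f 0 (-k - 1)
    rw [sub_add_cancel] at ha h0
    linarith

theorem monotone_signedSum (hf : ∀ u, 0 ≤ f u) (a : ℤ) : Monotone (signedSum f a) :=
  monotone_int_of_le_succ fun k => by rw [signedSum_add_one_right]; linarith [hf k]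

theorem monotone_sub_signedSum (hf : ∀ u, f u ≤ 1) (a : ℤ) :
    Monotone fun k => k - signedSum f a k :=
  monotone_int_of_le_succ fun k => by simp only [signedSum_add_one_right]; linarith [hf k]

end signedSum

section Del

variable {C : Type*} (ε : C → C → ℤ) (c : ℤ → C)

theorem Del_eq_signedSum : Del ε c = signedSum fun u => ε (c u) (c (u + 1)) := rfl

theorem Del_eq_sub (a b : ℤ) : Del ε c a b = Del ε c 0 b - Del ε c 0 a :=
  signedSum_eq_sub _ a b

theorem Del_self_add_one (a : ℤ) : Del ε c a (a + 1) = ε (c a) (c (a + 1)) := by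
  simp [Del_eq_signedSum, signedSum_add_one_right]

theorem Del_zero_add_one (a : ℤ) : Del ε c 0 (a + 1) = Del ε c 0 a + ε (c a) (c (a + 1)) :=
  signedSum_add_one_right _ 0 a

theorem monotone_Del (hε : ∀ x y, 0 ≤ ε x y) : Monotone (Del ε c 0) :=
  monotone_signedSum _ (fun _ => hε _ _) 0

theorem monotone_sub_Del (hε : ∀ x y, ε x y ≤ 1) : Monotone fun k => k - Del ε c 0 k :=
  monotone_sub_signedSum _ (fun _ => hε _ _) 0

end Del

section Bet

variable (J : Finset ℤ)

theorem Bet_eq_signedSum : Bet J = signedSum fun u => if u ∈ J then 1 else 0 := by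
  ext a b
  simp only [Bet, signedSum, ← Finset.filter_mem_eq_inter, Finset.natCast_card_filter]

theorem Bet_eq_sub (a b : ℤ) : Bet J a b = Bet J 0 b - Bet J 0 a := by
  simp only [Bet_eq_signedSum]
  exact signedSum_eq_sub _ a b

theorem Bet_zero_add_one (a : ℤ) : Bet J 0 (a + 1) = Bet J 0 a + if a ∈ J then 1 else 0 := by
  rw [Bet_eq_signedSum, signedSum_add_one_right]

theorem monotone_Bet : Monotone (Bet J 0) := by
  rw [Bet_eq_signedSum]
  exact monotone_signedSum _ (fun _ => by split_ifs <;> omega) 0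

theorem monotone_sub_Bet : Monotone fun k => k - Bet J 0 k := by
  rw [Bet_eq_signedSum]
  exact monotone_sub_signedSum _ (fun _ => by split_ifs <;> omega) 0

end Bet

section Phi

variable {C : Type*} (ε : C → C → ℤ) (c : ℤ → C) (l : ℤ → ℤ) (J : Finset ℤ) (s : ℤ)

theorem Phi_eq (j i : ℤ) :
    Phi ε c l J j i = (l j + Del ε c 0 j) - 2 * (l (i + 1) + Del ε c 0 (i + 1)) +
      Del ε c 0 (i + 1 - Bet J 0 i + Bet J 0 j) := by
  rw [Phi, Del_eq_sub ε c j, Del_eq_sub ε c (i + 1 - _), Bet_eq_sub J j i]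
  ring_nf

variable {ε c l J s}

theorem antitoneOn_l_add_Del_add_Bet
    (hchain : ∀ k, 1 ≤ k → k < s → ε (c k) (c (k + 1)) ≤ l k - l (k + 1))
    (hJ : ∀ j ∈ J, 2 ≤ j → Del ε c (j - 1) j < l (j - 1) - l j) :
    AntitoneOn (fun k => l k + Del ε c 0 k + Bet J 0 (k + 1)) (Set.Icc 1 s) := by
  refine antitoneOn_of_add_one_le Set.ordConnected_Icc fun k _ hk hk₁ => ?_
  simp only [Set.mem_Icc] at hk hk₁
  rw [Del_zero_add_one, Bet_zero_add_one J (k + 1)]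
  split_ifs with hkJ
  · have hstrict := hJ (k + 1) hkJ (by omega)
    rw [add_sub_cancel_right, Del_self_add_one] at hstrict
    linarith
  · linarith [hchain k hk.1 (by omega)]

theorem antitoneOn_Phi_left (hε : ∀ x y, ε x y ≤ 1)
    (hchain : ∀ k, 1 ≤ k → k < s → ε (c k) (c (k + 1)) ≤ l k - l (k + 1))
    (hJ : ∀ j ∈ J, 2 ≤ j → Del ε c (j - 1) j < l (j - 1) - l j) (i : ℤ) :
    AntitoneOn (fun j => Phi ε c l J j i) (↑J ∩ Set.Icc 1 s) := by
  rintro j ⟨hj, hjs⟩ j' ⟨hj', hj's⟩ hjj'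
  have hpot := antitoneOn_l_add_Del_add_Bet hchain hJ hjs hj's hjj'
  have hD := monotone_sub_Del ε c hε <|
    add_le_add_right (monotone_Bet J hjj') (i + 1 - Bet J 0 i)
  simp only [Bet_zero_add_one, Finset.mem_coe.mp hj, Finset.mem_coe.mp hj', if_true] at hpot
  simp only [Phi_eq]
  linarith

theorem monotoneOn_Phi_right (hε : ∀ x y, 0 ≤ ε x y)
    (hchain : ∀ k, 1 ≤ k → k < s → ε (c k) (c (k + 1)) ≤ l k - l (k + 1))
    (hJ : ∀ j ∈ J, 2 ≤ j → Del ε c (j - 1) j < l (j - 1) - l j) (j : ℤ) :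
    MonotoneOn (Phi ε c l J j) (Set.Icc 0 (s - 1)) := by
  rintro i ⟨hi₀, his⟩ i' ⟨hi'₀, hi's⟩ hii'
  have hpot := antitoneOn_l_add_Del_add_Bet hchain hJ (a := i + 1) (b := i' + 1)
    ⟨by omega, by omega⟩ ⟨by omega, by omega⟩ (by omega)
  have hB := monotone_Bet J (show i + 1 + 1 ≤ i' + 1 + 1 by omega)
  have hshift := monotone_sub_Bet J hii'
  have hD := monotone_Del ε c hε <|
    add_le_add_left (show i + 1 - Bet J 0 i ≤ i' + 1 - Bet J 0 i' by linarith) (Bet J 0 j)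
  simp only [Phi_eq]
  linarith

end Phi

theorem statement9_general {C : Type*} (ε : C → C → ℤ)
    (hε : ∀ c c', ε c c' = 0 ∨ ε c c' = 1)
    (s : ℤ) (l : ℤ → ℤ) (c : ℤ → C) (I J : Finset ℤ)
    (hchain : ∀ k, 1 ≤ k → k < s → ε (c k) (c (k + 1)) ≤ l k - l (k + 1))
    (hu : I ∪ I.image (· + 1) ∪ J = Finset.Icc 1 s)
    (hJ : ∀ j ∈ J, 2 ≤ j → Del ε c (j - 1) j < l (j - 1) - l j) :
    (∀ j ∈ J, ∀ j' ∈ J, j < j' → ∀ i ∈ I, Phi ε c l J j' i ≤ Phi ε c l J j i) ∧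
    (∀ j ∈ J, ∀ i ∈ I, ∀ i' ∈ I, i < i' → Phi ε c l J j i ≤ Phi ε c l J j i') := by
  have hε₀ (x y : C) : 0 ≤ ε x y := by rcases hε x y with h | h <;> omega
  have hε₁ (x y : C) : ε x y ≤ 1 := by rcases hε x y with h | h <;> omega
  have hmem (k : ℤ) (hk : k ∈ I ∪ I.image (· + 1) ∪ J) : 1 ≤ k ∧ k ≤ s :=
    Finset.mem_Icc.mp (hu ▸ hk)
  have hJs (j : ℤ) (hj : j ∈ J) : j ∈ (↑J ∩ Set.Icc 1 s : Set ℤ) :=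
    ⟨hj, hmem j (by simp [hj])⟩
  have hIs (i : ℤ) (hi : i ∈ I) : i ∈ Set.Icc 0 (s - 1) := by
    have := hmem (i + 1) (by simp [hi])
    constructor <;> omega
  exact ⟨fun j hj j' hj' hjj' i _ =>
      antitoneOn_Phi_left hε₁ hchain hJ i (hJs j hj) (hJs j' hj') hjj'.le,
    fun j _ i hi i' hi' hii' =>
      monotoneOn_Phi_right hε₀ hchain hJ j (hIs i hi) (hIs i' hi') hii'.le⟩

/-- Lemma 4.2: `φ` is non-increasing in its first argument on `J` and non-decreasing in
its second argument on `I`. -/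
theorem statement9 {C : Type*} (ε : C → C → ℤ)
    (hε : ∀ c c', ε c c' = 0 ∨ ε c c' = 1)
    (s : ℤ) (l : ℤ → ℤ) (c : ℤ → C) (I J : Finset ℤ)
    (hchain : ∀ k, 1 ≤ k → k < s → ε (c k) (c (k + 1)) ≤ l k - l (k + 1))
    (hd1 : Disjoint I (I.image (· + 1))) (hd2 : Disjoint I J)
    (hd3 : Disjoint (I.image (· + 1)) J)
    (hu : I ∪ I.image (· + 1) ∪ J = Finset.Icc 1 s)
    (hI : ∀ i ∈ I, l i - l (i + 1) = Del ε c i (i + 1))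
    (hJ : ∀ j ∈ J, 2 ≤ j → Del ε c (j - 1) j < l (j - 1) - l j) :
    (∀ j ∈ J, ∀ j' ∈ J, j < j' → ∀ i ∈ I, Phi ε c l J j' i ≤ Phi ε c l J j i) ∧
    (∀ j ∈ J, ∀ i ∈ I, ∀ i' ∈ I, i < i' → Phi ε c l J j i ≤ Phi ε c l J j i') :=
  statement9_general ε hε s l c I J hchain hu hJ
end

section
/- With λ = ((l₁,c₁),…,(l_s,c_s)) a sequence of primary particles consecutively related by ≻_ε, and with I, J subsets of {1,…,s} such that I, I+1, J form a set-partition of {1,…,s}, l_i − l_{i+1} = Δ(i,i+1) for all i ∈ I, and l_{j−1} − l_j > Δ(j−1,j) for all j ∈ J with j ≥ 2, the inequality l_k − l_{k'} ≥ α(k,k') + Δ(k,k') holds for all k ≤ k' in {1,…,s}, where α(k,k') = |(k,k'] ∩ J|. -/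
namespace Del

variable {C : Type*} (ε : C → C → ℤ) (c : ℤ → C)

@[simp]
theorem self (k : ℤ) : Del ε c k k = 0 := by
  simp [Del]

theorem eq_sum {k k' : ℤ} (h : k ≤ k') :
    Del ε c k k' = ∑ u ∈ Finset.Ico k k', ε (c u) (c (u + 1)) := by
  simp [Del, Finset.Ico_eq_empty_of_le h]

theorem add_one_right {k k' : ℤ} (h : k ≤ k') :
    Del ε c k (k' + 1) = Del ε c k k' + ε (c k') (c (k' + 1)) := by
  rw [eq_sum ε c h, eq_sum ε c (by omega), Finset.sum_Ico_add_eq_sum_Ico_add_one h]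

theorem sub_one_self (j : ℤ) : Del ε c (j - 1) j = ε (c (j - 1)) (c j) := by
  have h := add_one_right ε c (le_refl (j - 1))
  rwa [sub_add_cancel, self, zero_add] at h

end Del

theorem Finset.card_Ioc_add_one_inter {k n : ℤ} (h : k ≤ n) (J : Finset ℤ) :
    ((Ioc k (n + 1) ∩ J).card : ℤ) = (Ioc k n ∩ J).card + if n + 1 ∈ J then 1 else 0 := by
  rw [← insert_Ioc_right_eq_Ioc_add_one h]
  split_ifs with hJ
  · rw [insert_inter_of_mem hJ, card_insert_of_notMem (by simp), Nat.cast_succ]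
  · rw [insert_inter_of_notMem hJ, add_zero]

theorem indicator_add_energy_le {C : Type*} {ε : C → C → ℤ} {s : ℤ} {l : ℤ → ℤ} {c : ℤ → C}
    {J : Finset ℤ}
    (hchain : ∀ k, 1 ≤ k → k < s → ε (c k) (c (k + 1)) ≤ l k - l (k + 1))
    (hJ : ∀ j ∈ J, 2 ≤ j → Del ε c (j - 1) j < l (j - 1) - l j)
    {n : ℤ} (h1 : 1 ≤ n) (hs : n < s) :
    (if n + 1 ∈ J then 1 else 0) + ε (c n) (c (n + 1)) ≤ l n - l (n + 1) := by
  split_ifs with hmem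
  · have h := hJ (n + 1) hmem (by omega)
    rw [Del.sub_one_self, add_sub_cancel_right] at h
    omega
  · simpa using hchain n h1 hs

theorem statement10_general {C : Type*} (ε : C → C → ℤ)
    (s : ℤ) (l : ℤ → ℤ) (c : ℤ → C) (J : Finset ℤ)
    (hchain : ∀ k, 1 ≤ k → k < s → ε (c k) (c (k + 1)) ≤ l k - l (k + 1))
    (hJ : ∀ j ∈ J, 2 ≤ j → Del ε c (j - 1) j < l (j - 1) - l j) :
    ∀ k k', 1 ≤ k → k ≤ k' → k' ≤ s →
      ((Finset.Ioc k k' ∩ J).card : ℤ) + Del ε c k k' ≤ l k - l k' := by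
  intro k k' hk hkk'
  induction k', hkk' using Int.leInduction with
  | base => simp
  | succ n hkn ih =>
    intro hns
    have hstep := indicator_add_energy_le hchain hJ (n := n) (by omega) (by omega)
    rw [Finset.card_Ioc_add_one_inter hkn, Del.add_one_right ε c hkn]
    linarith [ih (by omega)]

/-- Equation (4.5): for a sequence consecutively related by `≻_ε` with its decomposition
`I, I+1, J` of `{1,…,s}`, one has `l_k − l_{k'} ≥ α(k,k') + Δ(k,k')` for all `k ≤ k'`,
where `α(k,k') = |(k,k'] ∩ J|`. -/
theorem statement10 {C : Type*} (ε : C → C → ℤ)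
    (hε : ∀ c c', ε c c' = 0 ∨ ε c c' = 1)
    (s : ℤ) (l : ℤ → ℤ) (c : ℤ → C) (I J : Finset ℤ)
    (hchain : ∀ k, 1 ≤ k → k < s → ε (c k) (c (k + 1)) ≤ l k - l (k + 1))
    (hd1 : Disjoint I (I.image (· + 1))) (hd2 : Disjoint I J)
    (hd3 : Disjoint (I.image (· + 1)) J)
    (hu : I ∪ I.image (· + 1) ∪ J = Finset.Icc 1 s)
    (hI : ∀ i ∈ I, l i - l (i + 1) = Del ε c i (i + 1))
    (hJ : ∀ j ∈ J, 2 ≤ j → Del ε c (j - 1) j < l (j - 1) - l j) :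
    ∀ k k', 1 ≤ k → k ≤ k' → k' ≤ s →
      ((Finset.Ioc k k' ∩ J).card : ℤ) + Del ε c k k' ≤ l k - l k' :=
  statement10_general ε s l c J hchain hJ
end

section
/- For every sequence λ = ((l₁,c₁),…,(l_s,c_s)) of primary particles consecutively related by ≻_ε, there exists a unique pair of subsets I, J of {1,…,s} such that: (1) I, I+1 and J form a set-partition of {1,…,s}; (2) for all i ∈ I, l_i − l_{i+1} = Δ(i,i+1); (3) for all j ∈ J with 2 ≤ j ≤ s, l_{j−1} − l_j > Δ(j−1,j). -/
open Finset

theorem Del_add_one {C : Type*} (ε : C → C → ℤ) (c : ℤ → C) (k : ℤ) :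
    Del ε c k (k + 1) = ε (c k) (c (k + 1)) := by
  simp [Del, Ico_add_one_right_eq_Icc]

theorem Finset.mem_image_add_right_iff {α : Type*} [AddGroup α] [DecidableEq α]
    {I : Finset α} {b k : α} : k ∈ I.image (· + b) ↔ k - b ∈ I :=
  mem_image.trans ⟨by rintro ⟨i, hi, rfl⟩; simpa, fun h => ⟨k - b, h, sub_add_cancel k b⟩⟩

def IsGreedyFromRight (T : ℤ → Prop) (a s : ℤ) (I : Finset ℤ) : Prop :=
  ∀ k, k ∈ I ↔ a ≤ k ∧ k < s ∧ T k ∧ k + 1 ∉ I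

theorem IsGreedyFromRight.eq {T : ℤ → Prop} {a s : ℤ} {I I' : Finset ℤ}
    (hI : IsGreedyFromRight T a s I) (hI' : IsGreedyFromRight T a s I') : I = I' := by
  ext k
  rcases le_or_gt k s with hk | hk
  · induction k, hk using Int.leInductionDown with
    | base => simp [hI s, hI' s]
    | pred n _ ih => rw [hI, hI', sub_add_cancel, ih]
  · rw [hI, hI']
    omega

theorem exists_isGreedyFromRight (T : ℤ → Prop) (a s : ℤ) :
    ∃ I, IsGreedyFromRight T a s I := by
  classical
  rcases le_or_gt a s with h | h
  · induction a, h using Int.leInductionDown with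
    | base => exact ⟨∅, fun k => by simp; omega⟩
    | pred b _ ih =>
      obtain ⟨I, hI⟩ := ih
      refine ⟨if T (b - 1) ∧ b ∉ I then insert (b - 1) I else I, fun k => ?_⟩
      have := hI k
      have := hI (k + 1)
      have := hI (b - 1)
      split_ifs <;> grind
  · exact ⟨∅, fun k => by simp; omega⟩

/-- Conditions (1)–(3) on `[a, s]`, with "not tight" in place of the strict inequality of (3). -/
def IsTightPartition (T : ℤ → Prop) (a s : ℤ) (I J : Finset ℤ) : Prop :=
  (Disjoint I (I.image (· + 1)) ∧ Disjoint I J ∧ Disjoint (I.image (· + 1)) J ∧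
    I ∪ I.image (· + 1) ∪ J = Icc a s) ∧
  (∀ i ∈ I, T i) ∧ (∀ j ∈ J, a < j → ¬ T (j - 1))

section

variable {T : ℤ → Prop} {a s : ℤ} {I J : Finset ℤ}

theorem IsTightPartition.isGreedyFromRight (h : IsTightPartition T a s I J) :
    IsGreedyFromRight T a s I := by
  obtain ⟨⟨hII, -, -, hcover⟩, hT, hJ⟩ := h
  intro k
  constructor
  · intro hk
    have hk1 : k + 1 ∈ I.image (· + 1) := mem_image_of_mem _ hk
    have hmem : k ∈ Icc a s ∧ k + 1 ∈ Icc a s := by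
      rw [← hcover]
      exact ⟨mem_union_left _ (mem_union_left _ hk), mem_union_left _ (mem_union_right _ hk1)⟩
    simp only [mem_Icc] at hmem
    exact ⟨hmem.1.1, by omega, hT k hk, disjoint_right.1 hII hk1⟩
  · rintro ⟨hak, hks, hTk, hk1⟩
    have hmem : k + 1 ∈ Icc a s := mem_Icc.2 ⟨by omega, by omega⟩
    rw [← hcover, mem_union, mem_union, mem_image_add_right_iff, add_sub_cancel_right] at hmem
    rcases hmem with (hk1' | hk) | hk1J
    · exact absurd hk1' hk1
    · exact hk
    · exact absurd (by simpa using hTk) (hJ _ hk1J (by omega))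

theorem IsGreedyFromRight.isTightPartition (hI : IsGreedyFromRight T a s I) :
    IsTightPartition T a s I (Icc a s \ (I ∪ I.image (· + 1))) := by
  have hsub : I ∪ I.image (· + 1) ⊆ Icc a s := by
    intro k
    rw [mem_union, mem_image_add_right_iff, mem_Icc, hI k, hI (k - 1)]
    omega
  refine ⟨⟨?_, ?_, ?_, union_sdiff_of_subset hsub⟩, fun i hi => ((hI i).1 hi).2.2.1, ?_⟩
  · refine disjoint_left.2 fun k hk hk' => ?_
    rw [mem_image_add_right_iff, hI, sub_add_cancel] at hk'
    exact hk'.2.2.2 hk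
  · exact disjoint_sdiff.mono_left subset_union_left
  · exact disjoint_sdiff.mono_left subset_union_right
  · intro j hj haj hT
    simp only [mem_sdiff, mem_Icc, mem_union, mem_image_add_right_iff, not_or] at hj
    exact hj.2.2 ((hI _).2 ⟨by omega, by omega, hT, by simpa using hj.2.1⟩)

theorem isTightPartition_iff :
    IsTightPartition T a s I J ↔
      IsGreedyFromRight T a s I ∧ J = Icc a s \ (I ∪ I.image (· + 1)) := by
  refine ⟨fun h => ⟨h.isGreedyFromRight, ?_⟩, fun ⟨hI, hJ⟩ => hJ ▸ hI.isTightPartition⟩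
  obtain ⟨⟨-, hIJ, hI1J, hcover⟩, -⟩ := h
  rw [← hcover, union_sdiff_cancel_left (disjoint_union_left.2 ⟨hIJ, hI1J⟩)]

end

theorem existsUnique_isTightPartition (T : ℤ → Prop) (a s : ℤ) :
    ∃! IJ : Finset ℤ × Finset ℤ, IsTightPartition T a s IJ.1 IJ.2 := by
  obtain ⟨I, hI⟩ := exists_isGreedyFromRight T a s
  refine ⟨(I, _), hI.isTightPartition, fun IJ h => ?_⟩
  obtain ⟨hI', hJ'⟩ := isTightPartition_iff.1 h
  rw [hI'.eq hI] at hJ'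
  exact Prod.ext (hI'.eq hI) hJ'

theorem statement11_general {C : Type*} (ε : C → C → ℤ)
    (s : ℤ) (l : ℤ → ℤ) (c : ℤ → C)
    (hchain : ∀ k, 1 ≤ k → k < s → ε (c k) (c (k + 1)) ≤ l k - l (k + 1)) :
    ∃! IJ : Finset ℤ × Finset ℤ,
      (Disjoint IJ.1 (IJ.1.image (· + 1)) ∧ Disjoint IJ.1 IJ.2 ∧
        Disjoint (IJ.1.image (· + 1)) IJ.2 ∧
        IJ.1 ∪ IJ.1.image (· + 1) ∪ IJ.2 = Finset.Icc 1 s) ∧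
      (∀ i ∈ IJ.1, l i - l (i + 1) = Del ε c i (i + 1)) ∧
      (∀ j ∈ IJ.2, 2 ≤ j → Del ε c (j - 1) j < l (j - 1) - l j) := by
  refine (existsUnique_congr fun IJ => ?_).2
    (existsUnique_isTightPartition (fun k => l k - l (k + 1) = Del ε c k (k + 1)) 1 s)
  refine and_congr_right fun hpart => and_congr_right fun _ => forall₂_congr fun j hj => ?_
  have hjs : j ≤ s := (mem_Icc.1 (hpart.2.2.2 ▸ mem_union_right _ hj)).2
  obtain ⟨k, rfl⟩ : ∃ k, j = k + 1 := ⟨j - 1, (sub_add_cancel j 1).symm⟩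
  rw [add_sub_cancel_right]
  refine imp_congr_ctx (by omega) fun hk => ?_
  have hle := hchain k (by omega) (by omega)
  rw [← Del_add_one ε c k] at hle
  exact hle.lt_iff_ne'

/-- Remark 4.1: for every sequence of primary particles consecutively related by `≻_ε`,
there is a unique pair of subsets `I, J` of `{1,…,s}` such that `I`, `I+1`, `J` form a
set-partition of `{1,…,s}`, `l_i − l_{i+1} = Δ(i,i+1)` for all `i ∈ I`, and
`l_{j−1} − l_j > Δ(j−1,j)` for all `j ∈ J` with `j ≥ 2`. -/
theorem statement11 {C : Type*} (ε : C → C → ℤ)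
    (hε : ∀ c c', ε c c' = 0 ∨ ε c c' = 1)
    (s : ℤ) (l : ℤ → ℤ) (c : ℤ → C)
    (hchain : ∀ k, 1 ≤ k → k < s → ε (c k) (c (k + 1)) ≤ l k - l (k + 1)) :
    ∃! IJ : Finset ℤ × Finset ℤ,
      (Disjoint IJ.1 (IJ.1.image (· + 1)) ∧ Disjoint IJ.1 IJ.2 ∧
        Disjoint (IJ.1.image (· + 1)) IJ.2 ∧
        IJ.1 ∪ IJ.1.image (· + 1) ∪ IJ.2 = Finset.Icc 1 s) ∧
      (∀ i ∈ IJ.1, l i - l (i + 1) = Del ε c i (i + 1)) ∧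
      (∀ j ∈ IJ.2, 2 ≤ j → Del ε c (j - 1) j < l (j - 1) - l j) :=
  statement11_general ε s l c hchain
end

section
/- Let ν ∈ E_ε be written as a sequence of primary particles ((l₁,c₁),…,(l_s,c_s)), where I ⊆ {1,…,s} indexes the upper halves of the secondary particles of ν (so l_i = l_{i+1} + ε(c_i,c_{i+1}) for i ∈ I), I+1 indexes the lower halves, and J indexes the particles of ν that are primary, I, I+1, J forming a set-partition of {1,…,s}. Then for all i ≤ i' with i, i' ∈ I ∪ (I+1), the inequality l_i − l_{i'} ≥ Δ(i,i') holds. -/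
open Finset

theorem Finset.sum_Ico_consecutive_of_le {α M : Type*} [LinearOrder α] [LocallyFiniteOrder α]
    [AddCommMonoid M] (f : α → M) {a b c : α} (hab : a ≤ b) (hbc : b ≤ c) :
    ∑ u ∈ Ico a b, f u + ∑ u ∈ Ico b c, f u = ∑ u ∈ Ico a c, f u := by
  rw [← sum_union (Ico_disjoint_Ico_consecutive a b c), Ico_union_Ico_eq_Ico hab hbc]

theorem Int.sum_Ico_sub_add_one {G : Type*} [AddCommGroup G] (g : ℤ → G) {a b : ℤ} (hab : a ≤ b) :
    ∑ u ∈ Ico a b, (g u - g (u + 1)) = g a - g b := by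
  induction b, hab using Int.leInduction with
  | base => simp
  | succ b hab ih =>
    rw [← insert_Ico_right_eq_Ico_add_one hab, sum_insert right_notMem_Ico, ih]
    abel

theorem Int.sum_Ico_nonneg_of_exists_step {M : Type*} [AddCommMonoid M] [PartialOrder M]
    [IsOrderedAddMonoid M] {S : Set ℤ} {e : ℤ → M}
    (hstep : ∀ i ∈ S, ∀ i' ∈ S, i < i' → ∃ q ∈ S, i < q ∧ q ≤ i' ∧ 0 ≤ ∑ u ∈ Ico i q, e u) :
    ∀ i ∈ S, ∀ i' ∈ S, i ≤ i' → 0 ≤ ∑ u ∈ Ico i i', e u := by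
  intro i hi i' hi'
  induction hn : (i' - i).toNat using Nat.strong_induction_on generalizing i with
  | _ n ih =>
    intro hii'
    rcases hii'.eq_or_lt with rfl | hlt
    · simp
    obtain ⟨q, hq, hiq, hqi', hsum⟩ := hstep i hi i' hi' hlt
    rw [← sum_Ico_consecutive_of_le e hiq.le hqi']
    exact add_nonneg hsum (ih _ (by omega) q hq rfl hqi')

section Particles

variable {C : Type*} (ε : C → C → ℤ) (c : ℤ → C) (l : ℤ → ℤ)

def slack (u : ℤ) : ℤ := l u - l (u + 1) - ε (c u) (c (u + 1))

theorem sum_Ico_slack {a b : ℤ} (hab : a ≤ b) :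
    ∑ u ∈ Ico a b, slack ε c l u = l a - l b - ∑ u ∈ Ico a b, ε (c u) (c (u + 1)) := by
  simp only [slack, sum_sub_distrib, Int.sum_Ico_sub_add_one l hab]

theorem sub_sub_le_sum_Ico_slack (hε : ∀ a b, ε a b ≤ 1) {a b : ℤ} (hab : a ≤ b) :
    l a - l b - (b - a) ≤ ∑ u ∈ Ico a b, slack ε c l u := by
  have hcount := sum_le_card_nsmul (Ico a b) _ 1 fun u _ ↦ hε (c u) (c (u + 1))
  rw [Int.card_Ico, nsmul_one] at hcount
  rw [sum_Ico_slack ε c l hab]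
  omega

/-- `I` marks the upper halves of the secondary particles and `J` the primary particles of a
sequence written as primary particles `(l u, c u)`; the last four fields are the four cases of
`≫_ε` between consecutive particles. -/
structure IsAdmissible (I J : Finset ℤ) : Prop where
  upper : ∀ i ∈ I, l i = l (i + 1) + ε (c i) (c (i + 1))
  primary_primary : ∀ k, k ∈ J → k + 1 ∈ J → ε (c k) (c (k + 1)) < l k - l (k + 1)
  primary_secondary : ∀ k, k ∈ J → k + 1 ∈ I →
    ε (c k) (c (k + 1)) + ε (c (k + 1)) (c (k + 2)) ≤
      l k - (2 * l (k + 2) + ε (c (k + 1)) (c (k + 2)))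
  secondary_primary : ∀ i ∈ I, i + 2 ∈ J →
    ε (c i) (c (i + 1)) + ε (c (i + 1)) (c (i + 2)) <
      (2 * l (i + 1) + ε (c i) (c (i + 1))) - l (i + 2)
  secondary_secondary : ∀ i ∈ I, i + 2 ∈ I →
    ε (c (i + 1)) (c (i + 2)) + ε (c (i + 2)) (c (i + 3)) ≤ l (i + 1) - l (i + 3)

variable {ε c l} {I J : Finset ℤ}

namespace IsAdmissible

theorem slack_eq_zero (h : IsAdmissible ε c l I J) {i : ℤ} (hi : i ∈ I) : slack ε c l i = 0 := by
  rw [slack, h.upper i hi]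
  ring

theorem le_sum_slack_of_gap (h : IsAdmissible ε c l I J) {j q : ℤ} (hj : j ∈ I) (hq : q ∈ I)
    (hjq : j + 3 ≤ q) (hJ : ∀ u, j + 1 < u → u < q → u ∈ J) :
    q - j - 2 - (l (j + 1) - l q) ≤ ∑ u ∈ Ico (j + 1) q, slack ε c l u := by
  have hfirst : 1 - l (j + 1) ≤ slack ε c l (j + 1) := by
    have := h.secondary_primary j hj (hJ (j + 2) (by omega) (by omega))
    rw [slack, show j + 1 + 1 = j + 2 by ring]
    linarith
  have hlast : l q ≤ slack ε c l (q - 1) := by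
    have := h.primary_secondary (q - 1) (hJ (q - 1) (by omega) (by omega))
      (by rwa [sub_add_cancel])
    rw [sub_add_cancel, show q - 1 + 2 = q + 1 by ring] at this
    rw [slack, sub_add_cancel]
    linarith [h.upper q hq]
  have hmiddle : q - j - 3 ≤ ∑ u ∈ Ico (j + 2) (q - 1), slack ε c l u := by
    have := card_nsmul_le_sum (Ico (j + 2) (q - 1)) (fun u ↦ slack ε c l u) 1 fun u hu ↦ by
      rw [mem_Ico] at hu
      have := h.primary_primary u (hJ u (by omega) (by omega)) (hJ (u + 1) (by omega) (by omega))
      rw [slack]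
      omega
    rw [Int.card_Ico, nsmul_one] at this
    omega
  rw [← insert_Ico_add_one_left_eq_Ico (by omega), sum_insert (by simp),
    ← insert_Ico_sub_one_right_eq_Ico (by omega), sum_insert right_notMem_Ico,
    show j + 1 + 1 = j + 2 by ring]
  linarith

theorem sum_slack_nonneg_of_gap (h : IsAdmissible ε c l I J) (hε : ∀ a b, ε a b ≤ 1)
    {j q : ℤ} (hj : j ∈ I) (hq : q ∈ I) (hjq : j + 1 < q)
    (hJ : ∀ u, j + 1 < u → u < q → u ∈ J) :
    0 ≤ ∑ u ∈ Ico (j + 1) q, slack ε c l u := by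
  rcases (by omega : q = j + 2 ∨ j + 3 ≤ q) with rfl | hjq3
  · have hII := h.secondary_secondary j hj hq
    have hq_upper := h.upper (j + 2) hq
    rw [show j + 2 = j + 1 + 1 by ring, Ico_add_one_right_eq_Icc, Icc_self, sum_singleton, slack]
    ring_nf at hII hq_upper ⊢
    linarith
  · have hlower := h.le_sum_slack_of_gap hj hq hjq3 hJ
    have hupper := sub_sub_le_sum_Ico_slack ε c l hε hjq.le
    omega

theorem exists_next_half (h : IsAdmissible ε c l I J) (hε : ∀ a b, ε a b ≤ 1) {s : ℤ}
    (hd1 : Disjoint I (I.image (· + 1))) (hu : I ∪ I.image (· + 1) ∪ J = Icc 1 s) :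
    ∀ i ∈ I ∪ I.image (· + 1), ∀ i' ∈ I ∪ I.image (· + 1), i < i' →
      ∃ q ∈ I ∪ I.image (· + 1), i < q ∧ q ≤ i' ∧ 0 ≤ ∑ u ∈ Ico i q, slack ε c l u := by
  intro i hi i' hi' hii'
  rcases mem_union.mp hi with hiI | hiLower
  · refine ⟨i + 1, mem_union_right _ (mem_image_of_mem _ hiI), by omega, by omega, ?_⟩
    rw [Ico_add_one_right_eq_Icc, Icc_self, sum_singleton, h.slack_eq_zero hiI]
  obtain ⟨j, hj, rfl⟩ := mem_image.mp hiLower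
  obtain ⟨q, hqT, hqmin⟩ :=
    ((I ∪ I.image (· + 1)).filter (fun x ↦ j + 1 < x ∧ x ≤ i')).exists_min_image
      id ⟨i', mem_filter.mpr ⟨hi', hii', le_rfl⟩⟩
  have hq_least : ∀ u ∈ I ∪ I.image (· + 1), j + 1 < u → u ≤ i' → q ≤ u :=
    fun u hu hju hui' ↦ hqmin u (mem_filter.mpr ⟨hu, hju, hui'⟩)
  obtain ⟨hqS, hjq, hqi'⟩ := mem_filter.mp hqT
  -- the first half after `j + 1` lies in `I`: a lower half `w + 1` there is preceded by `w ∈ I`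
  have hqI : q ∈ I := by
    refine (mem_union.mp hqS).resolve_right fun hqLower ↦ ?_
    obtain ⟨w, hw, rfl⟩ := mem_image.mp hqLower
    have hwj : w ≠ j + 1 := fun hwj ↦ disjoint_left.mp hd1 (hwj ▸ hw) hiLower
    have := hq_least w (mem_union_left _ hw) (by omega) (by omega)
    omega
  refine ⟨q, hqS, hjq, hqi', h.sum_slack_nonneg_of_gap hε hj hqI hjq fun u hju huq ↦ ?_⟩
  have hbounds : j + 1 ∈ Icc 1 s ∧ q ∈ Icc 1 s := by
    rw [← hu]
    exact ⟨mem_union_left _ hi, mem_union_left _ hqS⟩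
  have hu_mem : u ∈ I ∪ I.image (· + 1) ∪ J := by
    rw [hu, mem_Icc]
    rw [mem_Icc, mem_Icc] at hbounds
    omega
  exact (mem_union.mp hu_mem).resolve_left fun huS ↦ by
    have := hq_least u huS hju (by omega)
    omega

end IsAdmissible

end Particles

open Finset in
theorem statement13_general {C : Type*} (ε : C → C → ℤ)
    (hε : ∀ c c', ε c c' = 0 ∨ ε c c' = 1)
    (s : ℤ) (l : ℤ → ℤ) (c : ℤ → C) (I J : Finset ℤ)
    (hd1 : Disjoint I (I.image (· + 1)))
    (hu : I ∪ I.image (· + 1) ∪ J = Finset.Icc 1 s)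
    (hupper : ∀ i ∈ I, l i = l (i + 1) + ε (c i) (c (i + 1)))
    (hJJ : ∀ k, k ∈ J → k + 1 ∈ J →
      ε (c k) (c (k + 1)) < l k - l (k + 1))
    (hJI : ∀ k, k ∈ J → k + 1 ∈ I →
      ε (c k) (c (k + 1)) + ε (c (k + 1)) (c (k + 2)) ≤
        l k - (2 * l (k + 2) + ε (c (k + 1)) (c (k + 2))))
    (hIJ : ∀ i ∈ I, i + 2 ∈ J →
      ε (c i) (c (i + 1)) + ε (c (i + 1)) (c (i + 2)) <
        (2 * l (i + 1) + ε (c i) (c (i + 1))) - l (i + 2))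
    (hII : ∀ i ∈ I, i + 2 ∈ I →
      ε (c (i + 1)) (c (i + 2)) + ε (c (i + 2)) (c (i + 3)) ≤ l (i + 1) - l (i + 3))
    :
    ∀ i ∈ I ∪ I.image (· + 1), ∀ i' ∈ I ∪ I.image (· + 1), i ≤ i' →
      Del ε c i i' ≤ l i - l i' := by
  intro i hi i' hi' hii'
  have hε_le_one : ∀ a b, ε a b ≤ 1 := fun a b ↦ by rcases hε a b with h | h <;> omega
  have hadm : IsAdmissible ε c l I J := ⟨hupper, hJJ, hJI, hIJ, hII⟩
  have hslack := Int.sum_Ico_nonneg_of_exists_step (hadm.exists_next_half hε_le_one hd1 hu)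
    i hi i' hi' hii'
  rw [sum_Ico_slack ε c l hii'] at hslack
  rw [Del, Ico_eq_empty_of_le hii', sum_empty, sub_zero]
  linarith

/-- Lemma 4.9, equation (4.10): for `ν ∈ E_ε` written as a sequence of primary particles,
`l_i − l_{i'} ≥ Δ(i,i')` for all `i ≤ i'` in `I ∪ (I+1)`. -/
theorem statement13 {C : Type*} (ε : C → C → ℤ)
    (hε : ∀ c c', ε c c' = 0 ∨ ε c c' = 1)
    (s : ℤ) (l : ℤ → ℤ) (c : ℤ → C) (I J : Finset ℤ)
    (hd1 : Disjoint I (I.image (· + 1))) (hd2 : Disjoint I J)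
    (hd3 : Disjoint (I.image (· + 1)) J)
    (hu : I ∪ I.image (· + 1) ∪ J = Finset.Icc 1 s)
    (hupper : ∀ i ∈ I, l i = l (i + 1) + ε (c i) (c (i + 1)))
    (hJJ : ∀ k, k ∈ J → k + 1 ∈ J →
      ε (c k) (c (k + 1)) < l k - l (k + 1))
    (hJI : ∀ k, k ∈ J → k + 1 ∈ I →
      ε (c k) (c (k + 1)) + ε (c (k + 1)) (c (k + 2)) ≤
        l k - (2 * l (k + 2) + ε (c (k + 1)) (c (k + 2))))
    (hIJ : ∀ i ∈ I, i + 2 ∈ J →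
      ε (c i) (c (i + 1)) + ε (c (i + 1)) (c (i + 2)) <
        (2 * l (i + 1) + ε (c i) (c (i + 1))) - l (i + 2))
    (hII : ∀ i ∈ I, i + 2 ∈ I →
      ε (c (i + 1)) (c (i + 2)) + ε (c (i + 2)) (c (i + 3)) ≤ l (i + 1) - l (i + 3))
    :
    ∀ i ∈ I ∪ I.image (· + 1), ∀ i' ∈ I ∪ I.image (· + 1), i ≤ i' →
      Del ε c i i' ≤ l i - l i' :=
  statement13_general ε hε s l c I J hd1 hu hupper hJJ hJI hIJ hII
end

section
/- Let ν ∈ E_ε be written as a sequence of primary particles ((l₁,c₁),…,(l_s,c_s)) with I indexing upper halves of the secondary particles (so l_i = l_{i+1} + ε(c_i,c_{i+1}) for i ∈ I), I+1 indexing lower halves, and J indexing the primary particles of ν, I, I+1, J forming a set-partition of {1,…,s}. Let σ be a permutation of {1,…,s} that is increasing on J, increasing on I, and satisfies σ(i+1) = σ(i)+1 for all i ∈ I, and set ν''_m = (l_{σ^{-1}(m)} + Δ(m, σ^{-1}(m)), c_m) for each position m. Suppose that for every j ∈ J and i ∈ I with σ(j)+1 = σ(i), ν''_{σ(j)} ≻_ε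 ν''_{σ(i)}, and for every j ∈ J and i ∈ I with σ(j)−1 = σ(i)+1, ν''_{σ(i)+1} ≫_ε ν''_{σ(j)} (where ≫_ε on primary particles means the potential difference strictly exceeds ε of the states). Then for all (j,i) ∈ J × I: σ(j) < σ(i) if and only if ψ(j,i) ≥ 0, where ψ(j,i) = l_j − l_i − Δ(j,i). -/
/-- The potential of the rearranged sequence at position `m`:
the particle originally at position `σ⁻¹(m)` gains the formal energy of transfer
`Δ(m, σ⁻¹(m))` (Lemma 4.4). -/
noncomputable def Lpp {C : Type*} (ε : C → C → ℤ) (c : ℤ → C) (l : ℤ → ℤ) (σ : Equiv.Perm ℤ)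
    (m : ℤ) : ℤ :=
  l (σ.symm m) + Del ε c m (σ.symm m)

/-!
Transport every potential to position `0`: with `Φ k = l k + Δ(0,k)` one has
`ψ(p,q) = Φ p - Φ q`, and for consecutive positions `m, m + 1` of the rearranged sequence the
hypotheses on `σ` say `Φ (σ⁻¹ (m + 1)) ≤ Φ (σ⁻¹ m)` when a primary particle meets an upper half,
with strict inequality when a lower half meets a primary particle; the two halves of a secondary
particle have the same `Φ`. The remaining meetings, primary–primary and lower–upper, keep the order
of `ν`, and there the relations `≫_ε` of `ν` give the same inequalities (strict between primary
particles). So `m ↦ Φ (σ⁻¹ m)` is antitone and drops strictly onto each primary particle, which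
gives `σ j < σ i → Φ j ≥ Φ i` and `σ i < σ j → Φ i > Φ j`.
-/

open Finset

section Transfer

variable {C : Type*} (ε : C → C → ℤ) (c : ℤ → C)

lemma Del_add_one_right (a k : ℤ) :
    Del ε c a (k + 1) = Del ε c a k + ε (c k) (c (k + 1)) := by
  unfold Del
  rcases le_or_gt a k with h | h
  · rw [Ico_eq_empty_of_le (by omega : a ≤ k + 1), Ico_eq_empty_of_le h,
      ← insert_Ico_right_eq_Ico_add_one h, sum_insert (by simp)]
    ring
  · rw [Ico_eq_empty_of_le (by omega : k + 1 ≤ a), Ico_eq_empty_of_le h.le,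
      ← insert_Ico_add_one_left_eq_Ico h, sum_insert (by simp)]
    ring

lemma Del_add (a b d : ℤ) : Del ε c a b + Del ε c b d = Del ε c a d := by
  induction d using Int.inductionOn' (b := b) with
  | zero => simp [Del]
  | succ k _ ih => rw [Del_add_one_right, Del_add_one_right, ← ih]; ring
  | pred k _ ih =>
    have h₁ := Del_add_one_right ε c b (k - 1)
    have h₂ := Del_add_one_right ε c a (k - 1)
    rw [sub_add_cancel] at h₁ h₂
    linarith

lemma Del_le_sub (hε : ∀ x y, ε x y ≤ 1) {a b : ℤ} (h : a ≤ b) : Del ε c a b ≤ b - a := by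
  rw [Del, Ico_eq_empty_of_le h, sum_empty, sub_zero, ← Int.card_Ico_of_le a b h]
  simpa using sum_le_card_nsmul (Ico a b) _ 1 fun u _ ↦ hε (c u) (c (u + 1))

noncomputable def normPot (l : ℤ → ℤ) (k : ℤ) : ℤ := l k + Del ε c 0 k

variable (l : ℤ → ℤ)

lemma sub_sub_Del_eq (p q : ℤ) :
    l p - l q - Del ε c p q = normPot ε c l p - normPot ε c l q := by
  have := Del_add ε c 0 p q
  unfold normPot
  linarith

lemma normPot_sub_normPot_add_one (k : ℤ) :
    normPot ε c l k - normPot ε c l (k + 1) = l k - l (k + 1) - ε (c k) (c (k + 1)) := by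
  rw [← sub_sub_Del_eq, ← zero_add k, Del_add_one_right, zero_add]
  simp [Del]

lemma Lpp_sub_Lpp_of_map_eq_add_one {σ : Equiv.Perm ℤ} {p q : ℤ} (hpq : σ q = σ p + 1) :
    Lpp ε c l σ (σ p) - Lpp ε c l σ (σ q) - ε (c (σ p)) (c (σ q)) =
      normPot ε c l p - normPot ε c l q := by
  have h₁ := Del_add ε c 0 (σ p) p
  have h₂ := Del_add ε c 0 (σ q) q
  have h₃ := Del_add_one_right ε c 0 (σ p)
  rw [← hpq] at h₃
  unfold Lpp normPot
  simp only [Equiv.symm_apply_apply]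
  linarith

end Transfer

lemma mem_image_add_one_iff {G : Type*} [AddGroupWithOne G] [DecidableEq G] {I : Finset G}
    {k : G} : k ∈ I.image (· + 1) ↔ k - 1 ∈ I := by
  simp [sub_eq_add_neg]

structure IsParticlePartition (I J : Finset ℤ) (s : ℤ) : Prop where
  disjoint_upper_lower : Disjoint I (I.image (· + 1))
  disjoint_upper_primary : Disjoint I J
  disjoint_lower_primary : Disjoint (I.image (· + 1)) J
  union_eq : I ∪ I.image (· + 1) ∪ J = Icc 1 s

namespace IsParticlePartition

variable {I J : Finset ℤ} {s : ℤ}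

lemma mem_Icc_iff (hP : IsParticlePartition I J s) {k : ℤ} :
    k ∈ Icc 1 s ↔ k ∈ I ∨ k - 1 ∈ I ∨ k ∈ J := by
  rw [← hP.union_eq, mem_union, mem_union, mem_image_add_one_iff, or_assoc]

lemma add_one_notMem_upper (hP : IsParticlePartition I J s) {i : ℤ} (hi : i ∈ I) :
    i + 1 ∉ I := fun h ↦
  disjoint_left.mp hP.disjoint_upper_lower h (mem_image_add_one_iff.mpr (by simpa using hi))

lemma add_one_notMem_primary (hP : IsParticlePartition I J s) {i : ℤ} (hi : i ∈ I) :
    i + 1 ∉ J :=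
  disjoint_left.mp hP.disjoint_lower_primary (mem_image_add_one_iff.mpr (by simpa using hi))

lemma notMem_upper_of_mem_primary (hP : IsParticlePartition I J s) {j : ℤ} (hj : j ∈ J) :
    j ∉ I := fun h ↦ disjoint_left.mp hP.disjoint_upper_primary h hj

end IsParticlePartition

/-- `ν ∈ E_ε`, for `ν` written as the sequence of primary particles `(l k, c k)` with upper
halves at `I`, lower halves at `I + 1` and primary particles at `J`. -/
structure MemE {C : Type*} (ε : C → C → ℤ) (l : ℤ → ℤ) (c : ℤ → C) (I J : Finset ℤ) :
    Prop where
  upper : ∀ i ∈ I, l i = l (i + 1) + ε (c i) (c (i + 1))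
  primary_primary : ∀ k, k ∈ J → k + 1 ∈ J → ε (c k) (c (k + 1)) < l k - l (k + 1)
  primary_secondary : ∀ k, k ∈ J → k + 1 ∈ I →
    ε (c k) (c (k + 1)) + ε (c (k + 1)) (c (k + 2)) ≤
      l k - (2 * l (k + 2) + ε (c (k + 1)) (c (k + 2)))
  secondary_primary : ∀ i ∈ I, i + 2 ∈ J →
    ε (c i) (c (i + 1)) + ε (c (i + 1)) (c (i + 2)) <
      (2 * l (i + 1) + ε (c i) (c (i + 1))) - l (i + 2)
  secondary_secondary : ∀ i ∈ I, i + 2 ∈ I →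
    ε (c (i + 1)) (c (i + 2)) + ε (c (i + 2)) (c (i + 3)) ≤ l (i + 1) - l (i + 3)

namespace MemE

variable {C : Type*} {ε : C → C → ℤ} {l : ℤ → ℤ} {c : ℤ → C} {I J : Finset ℤ} {s : ℤ}

local notation "Φ" => normPot ε c l

lemma normPot_upper (hν : MemE ε l c I J) {i : ℤ} (hi : i ∈ I) : Φ (i + 1) = Φ i := by
  have := normPot_sub_normPot_add_one ε c l i
  have := hν.upper i hi
  linarith

lemma normPot_primary_primary (hν : MemE ε l c I J) {k : ℤ} (hk : k ∈ J) (hk' : k + 1 ∈ J) :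
    Φ (k + 1) < Φ k := by
  have := normPot_sub_normPot_add_one ε c l k
  have := hν.primary_primary k hk hk'
  linarith

lemma normPot_primary_secondary (hν : MemE ε l c I J) {k : ℤ} (hk : k ∈ J) (hk' : k + 1 ∈ I) :
    l (k + 1) ≤ Φ k - Φ (k + 1) := by
  have h₁ := normPot_sub_normPot_add_one ε c l k
  have h₂ := hν.primary_secondary k hk hk'
  have h₃ := hν.upper (k + 1) hk'
  rw [add_assoc, one_add_one_eq_two] at h₃
  linarith

lemma normPot_secondary_primary (hν : MemE ε l c I J) {n : ℤ} (hn : n - 1 ∈ I)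
    (hn' : n + 1 ∈ J) : 0 < l n + (Φ n - Φ (n + 1)) := by
  obtain ⟨i, rfl⟩ : ∃ i, n = i + 1 := ⟨n - 1, by ring⟩
  rw [add_sub_cancel_right] at hn
  rw [add_assoc, one_add_one_eq_two] at hn' ⊢
  have h₁ := normPot_sub_normPot_add_one ε c l (i + 1)
  have h₂ := hν.secondary_primary i hn hn'
  rw [add_assoc, one_add_one_eq_two] at h₁
  linarith

lemma normPot_secondary_secondary (hν : MemE ε l c I J) {n : ℤ} (hn : n - 1 ∈ I)
    (hn' : n + 1 ∈ I) : Φ (n + 1) ≤ Φ n := by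
  obtain ⟨i, rfl⟩ : ∃ i, n = i + 1 := ⟨n - 1, by ring⟩
  rw [add_sub_cancel_right] at hn
  rw [add_assoc, one_add_one_eq_two] at hn' ⊢
  have h₁ := normPot_sub_normPot_add_one ε c l (i + 1)
  have h₂ := hν.secondary_secondary i hn hn'
  have h₃ := hν.upper (i + 2) hn'
  rw [add_assoc, one_add_one_eq_two] at h₁
  rw [add_assoc, show (2 : ℤ) + 1 = 3 by norm_num] at h₃
  linarith

lemma descent_step (hν : MemE ε l c I J) (hP : IsParticlePartition I J s)
    (hε : ∀ x y, 0 ≤ ε x y) {p n : ℤ} (hn : 1 ≤ n)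
    (hJ : n ∈ J → Φ n ≤ Φ p) (hI : n ∈ I → l n ≤ Φ p - Φ n)
    (hL : n - 1 ∈ I → l (n - 1) ≤ Φ p - Φ n) :
    (n + 1 ∈ J → Φ (n + 1) < Φ p) ∧ (n + 1 ∈ I → l (n + 1) ≤ Φ p - Φ (n + 1)) ∧
      (n ∈ I → l n ≤ Φ p - Φ (n + 1)) := by
  have hprev : n + 1 ∈ I ∨ n + 1 ∈ J → n ∈ J ∨ n - 1 ∈ I := by
    intro hn'
    have hs : n + 1 ∈ Icc 1 s := hP.mem_Icc_iff.mpr (by tauto)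
    rcases hP.mem_Icc_iff.mp (mem_Icc.mpr ⟨hn, by linarith [(mem_Icc.mp hs).2]⟩) with h | h | h
    · exact absurd hn' (by simp [hP.add_one_notMem_upper h, hP.add_one_notMem_primary h])
    · exact .inr h
    · exact .inl h
  refine ⟨fun hn' ↦ ?_, fun hn' ↦ ?_, fun hn' ↦ by rw [hν.normPot_upper hn']; exact hI hn'⟩
  · rcases hprev (.inr hn') with hnJ | hnL
    · linarith [hJ hnJ, hν.normPot_primary_primary hnJ hn']
    · have h := hν.upper _ hnL
      rw [sub_add_cancel] at h
      linarith [hL hnL, hν.normPot_secondary_primary hnL hn', hε (c (n - 1)) (c n)]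
  · rcases hprev (.inl hn') with hnJ | hnL
    · linarith [hJ hnJ, hν.normPot_primary_secondary hnJ hn']
    · have h := hν.upper _ hnL
      rw [sub_add_cancel] at h
      linarith [hL hnL, hν.normPot_secondary_secondary hnL hn', hε (c (n - 1)) (c n),
        hε (c n) (c (n + 1)), normPot_sub_normPot_add_one ε c l n]

/-- Entering a secondary particle from a primary one lowers `Φ` by at least the potential of
the upper half, and leaving it into a primary one raises `Φ` by less than the potential of the
lower half: hence the bound carried along at secondary particles. -/
lemma descent_from_primary (hν : MemE ε l c I J) (hP : IsParticlePartition I J s)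
    (hε : ∀ x y, 0 ≤ ε x y) {p : ℤ} (hp : p ∈ J) {w : ℤ} (hpw : p < w) :
    (w ∈ J → Φ w < Φ p) ∧ (w ∈ I → l w ≤ Φ p - Φ w) ∧
      (w - 1 ∈ I → l (w - 1) ≤ Φ p - Φ w) := by
  have hp1 : 1 ≤ p := (mem_Icc.mp (hP.mem_Icc_iff.mpr (by tauto))).1
  induction w, hpw using Int.leInduction with
  | base =>
    simpa using hν.descent_step hP hε hp1 (fun _ ↦ le_rfl)
      (fun h ↦ absurd h (hP.notMem_upper_of_mem_primary hp))
      (fun h ↦ absurd (by simpa using hP.add_one_notMem_primary h) (not_not.mpr hp))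
  | succ n hpn ih =>
    obtain ⟨hJ, hI, hL⟩ := ih
    simpa using hν.descent_step hP hε (by omega) (fun h ↦ (hJ h).le) hI hL

lemma normPot_lt_of_mem_primary (hν : MemE ε l c I J) (hP : IsParticlePartition I J s)
    (hε : ∀ x y, 0 ≤ ε x y) {p q : ℤ} (hp : p ∈ J) (hq : q ∈ J) (hpq : p < q) :
    Φ q < Φ p :=
  (hν.descent_from_primary hP hε hp hpq).1 hq

lemma sub_le_normPot_sub_of_primary_run (hν : MemE ε l c I J) {a b : ℤ} (hab : a ≤ b)
    (hrun : ∀ k, a ≤ k → k ≤ b → k ∈ J) : b - a ≤ Φ a - Φ b := by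
  induction b, hab using Int.leInduction with
  | base => simp
  | succ b hab ih =>
    have := hν.normPot_primary_primary (hrun b hab (by omega)) (hrun (b + 1) (by omega) le_rfl)
    linarith [ih fun k hak hkb ↦ hrun k hak (by omega)]

lemma normPot_lower_le_of_primary_run (hν : MemE ε l c I J) (hε : ∀ x y, ε x y ≤ 1)
    {i i' : ℤ} (hi : i ∈ I) (hi' : i' ∈ I) (hii' : i + 2 < i')
    (hrun : ∀ k, i + 2 ≤ k → k < i' → k ∈ J) : Φ (i' + 1) ≤ Φ (i + 1) := by
  have hJ : i + 1 + 1 ∈ J := by rw [add_assoc, one_add_one_eq_two]; exact hrun _ le_rfl (by omega)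
  have hJ' : i' - 1 ∈ J := hrun _ (by omega) (by omega)
  have h₁ := hν.normPot_secondary_primary (by simpa using hi) hJ
  have h₂ := hν.sub_le_normPot_sub_of_primary_run (by omega : i + 1 + 1 ≤ i' - 1)
    fun k hk hk' ↦ hrun k (by omega) (by omega)
  have h₃ := hν.normPot_primary_secondary hJ' (by simpa using hi')
  have h₄ := hν.normPot_upper hi'
  have h₅ := sub_sub_Del_eq ε c l (i + 1) i'
  have h₆ := Del_le_sub ε c hε (by omega : i + 1 ≤ i')
  rw [sub_add_cancel] at h₃
  -- `h₁`–`h₃` give `Φ (i + 1) - Φ i' ≥ l i' - l (i + 1) + (i' - i - 2)`, while `h₅`, `h₆` give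
  -- `l (i + 1) - l i' ≤ Φ (i + 1) - Φ i' + (i' - i - 1)`: so `2 (Φ (i + 1) - Φ i') ≥ -1`.
  omega

lemma normPot_lower_antitone (hν : MemE ε l c I J) (hP : IsParticlePartition I J s)
    (hε : ∀ x y, ε x y ≤ 1) {i i' : ℤ} (hi : i ∈ I) (hi' : i' ∈ I) (hii' : i < i') :
    Φ (i' + 1) ≤ Φ (i + 1) := by
  obtain ⟨n, hn⟩ : ∃ n : ℕ, i' - i ≤ n := ⟨(i' - i).toNat, Int.self_le_toNat _⟩
  induction n generalizing i i' with
  | zero => omega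
  | succ n ih =>
    by_cases hmid : ∃ x ∈ I, i < x ∧ x < i'
    · obtain ⟨x, hx, hix, hxi'⟩ := hmid
      exact (ih hx hi' hxi' (by omega)).trans (ih hi hx hix (by omega))
    push Not at hmid
    have hi'ne : i' ≠ i + 1 := by rintro rfl; exact hP.add_one_notMem_upper hi hi'
    rcases (by omega : i' = i + 2 ∨ i + 2 < i') with rfl | hlt
    · have h := hν.normPot_secondary_secondary (n := i + 1) (by simpa using hi)
        (by rwa [add_assoc, one_add_one_eq_two])
      rw [hν.normPot_upper hi']
      rwa [add_assoc, one_add_one_eq_two] at h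
    refine hν.normPot_lower_le_of_primary_run hε hi hi' hlt fun k hk hk' ↦ ?_
    have hs := mem_Icc.mp (hP.mem_Icc_iff.mpr (.inl hi))
    have hs' := mem_Icc.mp (hP.mem_Icc_iff.mpr (.inl hi'))
    have hk : k ∈ Icc 1 s := mem_Icc.mpr ⟨by omega, by omega⟩
    rcases hP.mem_Icc_iff.mp hk with hkI | hkL | hkJ
    · exact absurd (hmid k hkI (by omega)) (by omega)
    · exact absurd (hmid (k - 1) hkL (by omega)) (by omega)
    · exact hkJ

end MemE

structure IsRearrangement (σ : Equiv.Perm ℤ) (I J : Finset ℤ) (s : ℤ) : Prop where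
  mapsTo : ∀ k ∈ Icc 1 s, σ k ∈ Icc 1 s
  strictMonoOn_primary : StrictMonoOn σ J
  strictMonoOn_upper : StrictMonoOn σ I
  map_add_one : ∀ i ∈ I, σ (i + 1) = σ i + 1

namespace IsRearrangement

variable {C : Type*} {ε : C → C → ℤ} {l : ℤ → ℤ} {c : ℤ → C} {I J : Finset ℤ} {s : ℤ}
  {σ : Equiv.Perm ℤ}

local notation "Φ" => normPot ε c l

lemma symm_mem_Icc (hσ : IsRearrangement σ I J s) {m : ℤ} (hm : m ∈ Icc 1 s) :
    σ.symm m ∈ Icc 1 s := by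
  have hbij := ((Icc 1 s).finite_toSet.injOn_iff_bijOn_of_mapsTo (f := σ)
    fun k hk ↦ hσ.mapsTo k hk).mp σ.injective.injOn
  obtain ⟨k, hk, rfl⟩ := hbij.surjOn (mem_coe.mpr hm)
  simpa using hk

lemma eq_add_one_of_map_eq_add_one (hσ : IsRearrangement σ I J s) {p q : ℤ} (hp : p ∈ I)
    (hpq : σ q = σ p + 1) : q = p + 1 :=
  σ.injective (by rw [hpq, hσ.map_add_one p hp])

lemma map_sub_one_add_one (hσ : IsRearrangement σ I J s) {p : ℤ} (hp : p - 1 ∈ I) :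
    σ (p - 1) + 1 = σ p := by
  rw [← hσ.map_add_one _ hp, sub_add_cancel]

lemma normPot_le_of_map_eq_add_one_of_mem_upper (hσ : IsRearrangement σ I J s)
    (hν : MemE ε l c I J) (hP : IsParticlePartition I J s) (hε : ∀ x y, ε x y ≤ 1)
    (hmeet : ∀ j ∈ J, ∀ i ∈ I, σ j + 1 = σ i →
      ε (c (σ j)) (c (σ i)) ≤ Lpp ε c l σ (σ j) - Lpp ε c l σ (σ i))
    {p q : ℤ} (hp : p ∈ Icc 1 s) (hq : q ∈ I) (hpq : σ q = σ p + 1) : Φ q ≤ Φ p := by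
  rcases hP.mem_Icc_iff.mp hp with hpI | hpL | hpJ
  · rw [hσ.eq_add_one_of_map_eq_add_one hpI hpq] at hq
    exact absurd hq (hP.add_one_notMem_upper hpI)
  · have hlt : p - 1 < q := (hσ.strictMonoOn_upper.lt_iff_lt hpL hq).mp
      (by linarith [hσ.map_sub_one_add_one hpL])
    have := hν.normPot_lower_antitone hP hε hpL hq hlt
    rwa [sub_add_cancel, hν.normPot_upper hq] at this
  · linarith [hmeet p hpJ q hq hpq.symm, Lpp_sub_Lpp_of_map_eq_add_one ε c l hpq]

lemma normPot_lt_of_map_eq_add_one_of_mem_primary (hσ : IsRearrangement σ I J s)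
    (hν : MemE ε l c I J) (hP : IsParticlePartition I J s) (hε : ∀ x y, 0 ≤ ε x y)
    (hmeet : ∀ j ∈ J, ∀ i ∈ I, σ j - 1 = σ i + 1 →
      ε (c (σ i + 1)) (c (σ j)) < Lpp ε c l σ (σ i + 1) - Lpp ε c l σ (σ j))
    {p q : ℤ} (hp : p ∈ Icc 1 s) (hq : q ∈ J) (hpq : σ q = σ p + 1) : Φ q < Φ p := by
  rcases hP.mem_Icc_iff.mp hp with hpI | hpL | hpJ
  · rw [hσ.eq_add_one_of_map_eq_add_one hpI hpq] at hq
    exact absurd hq (hP.add_one_notMem_primary hpI)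
  · have h := hmeet q hq (p - 1) hpL (by rw [hσ.map_sub_one_add_one hpL]; omega)
    rw [hσ.map_sub_one_add_one hpL] at h
    linarith [Lpp_sub_Lpp_of_map_eq_add_one ε c l hpq]
  · exact hν.normPot_lt_of_mem_primary hP hε hpJ hq
      ((hσ.strictMonoOn_primary.lt_iff_lt hpJ hq).mp (by omega))

lemma normPot_le_of_map_eq_add_one (hσ : IsRearrangement σ I J s) (hν : MemE ε l c I J)
    (hP : IsParticlePartition I J s) (hε₀ : ∀ x y, 0 ≤ ε x y) (hε₁ : ∀ x y, ε x y ≤ 1)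
    (hmeet₁ : ∀ j ∈ J, ∀ i ∈ I, σ j + 1 = σ i →
      ε (c (σ j)) (c (σ i)) ≤ Lpp ε c l σ (σ j) - Lpp ε c l σ (σ i))
    (hmeet₂ : ∀ j ∈ J, ∀ i ∈ I, σ j - 1 = σ i + 1 →
      ε (c (σ i + 1)) (c (σ j)) < Lpp ε c l σ (σ i + 1) - Lpp ε c l σ (σ j))
    {p q : ℤ} (hp : p ∈ Icc 1 s) (hq : q ∈ Icc 1 s) (hpq : σ q = σ p + 1) : Φ q ≤ Φ p := by
  rcases hP.mem_Icc_iff.mp hq with hqI | hqL | hqJ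
  · exact hσ.normPot_le_of_map_eq_add_one_of_mem_upper hν hP hε₁ hmeet₁ hp hqI hpq
  · have hqp : q - 1 = p := σ.injective (by linarith [hσ.map_sub_one_add_one hqL])
    rw [← hqp, ← hν.normPot_upper hqL, sub_add_cancel]
  · exact (hσ.normPot_lt_of_map_eq_add_one_of_mem_primary hν hP hε₀ hmeet₂ hp hqJ hpq).le

lemma antitoneOn_normPot_symm (hσ : IsRearrangement σ I J s) (hν : MemE ε l c I J)
    (hP : IsParticlePartition I J s) (hε₀ : ∀ x y, 0 ≤ ε x y) (hε₁ : ∀ x y, ε x y ≤ 1)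
    (hmeet₁ : ∀ j ∈ J, ∀ i ∈ I, σ j + 1 = σ i →
      ε (c (σ j)) (c (σ i)) ≤ Lpp ε c l σ (σ j) - Lpp ε c l σ (σ i))
    (hmeet₂ : ∀ j ∈ J, ∀ i ∈ I, σ j - 1 = σ i + 1 →
      ε (c (σ i + 1)) (c (σ j)) < Lpp ε c l σ (σ i + 1) - Lpp ε c l σ (σ j)) :
    AntitoneOn (fun m ↦ Φ (σ.symm m)) (Set.Icc 1 s) := by
  refine antitoneOn_of_succ_le Set.ordConnected_Icc fun m _ hm hm' ↦ ?_
  rw [Order.succ_eq_add_one] at hm' ⊢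
  exact hσ.normPot_le_of_map_eq_add_one hν hP hε₀ hε₁ hmeet₁ hmeet₂
    (hσ.symm_mem_Icc (mem_Icc.mpr hm)) (hσ.symm_mem_Icc (mem_Icc.mpr hm')) (by simp)

end IsRearrangement

/-- Proposition 4.10 (final positions for `Ψ`): if in the rearranged sequence given by
`σ`, every primary particle immediately followed by the upper half of a secondary
particle is `≻_ε`-related to it, and every lower half immediately followed by a primary
particle is `≫_ε`-related to it, then for all `(j,i) ∈ J × I`,
`σ(j) < σ(i) ⟺ ψ(j,i) ≥ 0` where `ψ(j,i) = l_j − l_i − Δ(j,i)`. -/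
theorem statement16 {C : Type*} (ε : C → C → ℤ)
    (hε : ∀ c c', ε c c' = 0 ∨ ε c c' = 1)
    (s : ℤ) (l : ℤ → ℤ) (c : ℤ → C) (I J : Finset ℤ)
    (hd1 : Disjoint I (I.image (· + 1))) (hd2 : Disjoint I J)
    (hd3 : Disjoint (I.image (· + 1)) J)
    (hu : I ∪ I.image (· + 1) ∪ J = Finset.Icc 1 s)
    (hupper : ∀ i ∈ I, l i = l (i + 1) + ε (c i) (c (i + 1)))
    (hJJ : ∀ k, k ∈ J → k + 1 ∈ J →
      ε (c k) (c (k + 1)) < l k - l (k + 1))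
    (hJI : ∀ k, k ∈ J → k + 1 ∈ I →
      ε (c k) (c (k + 1)) + ε (c (k + 1)) (c (k + 2)) ≤
        l k - (2 * l (k + 2) + ε (c (k + 1)) (c (k + 2))))
    (hIJ : ∀ i ∈ I, i + 2 ∈ J →
      ε (c i) (c (i + 1)) + ε (c (i + 1)) (c (i + 2)) <
        (2 * l (i + 1) + ε (c i) (c (i + 1))) - l (i + 2))
    (hII : ∀ i ∈ I, i + 2 ∈ I →
      ε (c (i + 1)) (c (i + 2)) + ε (c (i + 2)) (c (i + 3)) ≤ l (i + 1) - l (i + 3))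
    (σ : Equiv.Perm ℤ)
    (hσmaps : ∀ k ∈ Finset.Icc 1 s, σ k ∈ Finset.Icc 1 s)
    (hσJ : ∀ j ∈ J, ∀ j' ∈ J, j < j' → σ j < σ j')
    (hσI : ∀ i ∈ I, ∀ i' ∈ I, i < i' → σ i < σ i')
    (hσI1 : ∀ i ∈ I, σ (i + 1) = σ i + 1)
    (hmeet1 : ∀ j ∈ J, ∀ i ∈ I, σ j + 1 = σ i →
      ε (c (σ j)) (c (σ i)) ≤ Lpp ε c l σ (σ j) - Lpp ε c l σ (σ i))
    (hmeet2 : ∀ j ∈ J, ∀ i ∈ I, σ j - 1 = σ i + 1 →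
      ε (c (σ i + 1)) (c (σ j)) < Lpp ε c l σ (σ i + 1) - Lpp ε c l σ (σ j)) :
    ∀ j ∈ J, ∀ i ∈ I, (σ j < σ i ↔ 0 ≤ l j - l i - Del ε c j i) := by
  intro j hj i hi
  have hP : IsParticlePartition I J s := ⟨hd1, hd2, hd3, hu⟩
  have hν : MemE ε l c I J := ⟨hupper, hJJ, hJI, hIJ, hII⟩
  have hσ : IsRearrangement σ I J s := ⟨hσmaps, hσJ, hσI, hσI1⟩
  have hε₀ : ∀ x y, 0 ≤ ε x y := fun x y ↦ by rcases hε x y with h | h <;> omega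
  have hε₁ : ∀ x y, ε x y ≤ 1 := fun x y ↦ by rcases hε x y with h | h <;> omega
  have hanti := hσ.antitoneOn_normPot_symm hν hP hε₀ hε₁ hmeet1 hmeet2
  have hσj := hσmaps j (hP.mem_Icc_iff.mpr (.inr (.inr hj)))
  have hσi := hσmaps i (hP.mem_Icc_iff.mpr (.inl hi))
  rw [sub_sub_Del_eq, sub_nonneg]
  constructor
  · intro hji
    simpa using hanti (mem_Icc.mp hσj) (mem_Icc.mp hσi) hji.le
  · intro hij
    by_contra! hji
    have hne : σ i ≠ σ j :=
      σ.injective.ne (by rintro rfl; exact hP.notMem_upper_of_mem_primary hj hi)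
    rw [mem_Icc] at hσi hσj
    have hm : σ j - 1 ∈ Icc 1 s := mem_Icc.mpr ⟨by omega, by omega⟩
    have h₁ := hσ.normPot_lt_of_map_eq_add_one_of_mem_primary hν hP hε₀ hmeet2
      (hσ.symm_mem_Icc hm) hj (by simp)
    have h₂ := hanti hσi (mem_Icc.mp hm) (by omega : σ i ≤ σ j - 1)
    simp only [Equiv.symm_apply_apply] at h₂
    linarith
end
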